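/- arXiv:2208.12732 — 4 statements merged into one kernel-verified Lean document; each statement's English description precedes it below -/
import Mathlib

section
/- Let A be a nonempty finite set, let B_A be either the set of all reflexive binary relations on A or the set of all irreflexive binary relations on A, and let X' = (B_A, ∪, ∩) be the bounded distributive lattice they form under union and intersection, with median μ'(R1,R2,R3) = (R1∪R2)∩(R2∪R3)∩(R3∪R1) = (R1∩R2)∪(R2∩R3)∪(R3∩R1). For an aggregation rule f : B_A^N → B_A, the following are equivalent: (i) f is strategy-proof on D^N for every rich domain D of locally unimodal preorders w.r.t. the median betweenness B_{μ'}; (ii) f is B_{μ'}-monotonic; (iii) f is monotonically M_{X'}-independent; (iv) f is monotonically J_{X'}-independent; (v) f is monotonically IIA; (vi) there exist an order filter 𝓕 of (P(N),⊆) and relations R_S ∈ B_A (S ∈ 𝓕) such that f(R_N) = ⋂_{S∈𝓕} ((⋃_{i∈S} R_i) ∪ R_S) for all profiles R_N; (vii) there exist an order filter 𝓕 of (P(N),⊆) and relations R_S ∈ B_A (S ∈ 𝓕) such that f(R_N) = ⋃_{S∈𝓕} ((⋂_{i∈S} R_i) ∩ R_S) for all profiles R_N. -/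
/-- A preorder (reflexive transitive relation) on `X`, used as an agent's
preference over outcomes. -/
structure Pref (X : Type*) where
  rel : X → X → Prop
  refl : ∀ x, rel x x
  trans : ∀ x y z, rel x y → rel y z → rel x z

namespace Pref

/-- Strict (asymmetric) part of a preference preorder. -/
def strict {X : Type*} (R : Pref X) (x y : X) : Prop := R.rel x y ∧ ¬ R.rel y x

/-- `t` is the unique maximum of the preorder `R`. -/
def IsTop {X : Type*} (R : Pref X) (t : X) : Prop :=
  (∀ y, R.rel t y) ∧ ∀ t', (∀ y, R.rel t' y) → t' = t

end Pref

/-- The interval `I^μ(x,y) = {z : z = μ(x,y,z)}` induced by a ternary median operation. -/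
def medInterval {X : Type*} (μ : X → X → X → X) (x y : X) : Set X :=
  {z | μ x y z = z}

/-- A preorder on `X` is locally unimodal (single-peaked) w.r.t. the betweenness induced
by the median `μ`: it has a unique maximum `t`, and any outcome lying strictly between
`t` and another outcome `y` is not worse than `y`. -/
def LocallyUnimodal {X : Type*} (μ : X → X → X → X) (R : Pref X) : Prop :=
  ∃ t, R.IsTop t ∧ ∀ y z, z ∈ medInterval μ t y → z ≠ t → ¬ R.strict y z

/-- A rich domain of locally unimodal preorders: for all `x,y` it contains a preorder
with top `x` whose upper contour set at `y` is exactly the interval `I^μ(x,y)`. -/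
def RichDomain {X : Type*} (μ : X → X → X → X) (D : Set (Pref X)) : Prop :=
  (∀ R ∈ D, LocallyUnimodal μ R) ∧
  ∀ x y : X, ∃ R ∈ D, R.IsTop x ∧ {z | R.rel z y} = medInterval μ x y

/-- Strategy-proofness of an aggregation rule on profiles drawn from the domain `D`:
no agent `i` whose true preference lies in `D` (with top `tops i`) can strictly gain
by reporting `y` instead of her top. -/
def StrategyProofOn {X N : Type*} [DecidableEq N]
    (f : (N → X) → X) (D : Set (Pref X)) : Prop :=
  ∀ prefs : N → Pref X, (∀ i, prefs i ∈ D) →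
    ∀ tops : N → X, (∀ j, (prefs j).IsTop (tops j)) →
      ∀ (i : N) (y : X),
        ¬ (prefs i).strict (f (Function.update tops i y)) (f tops)

/-- `B_μ`-monotonicity: `f(x_N)` always lies in the median interval between `x_i` and
the outcome obtained when `i` deviates to `y`. -/
def BMuMonotonic {X N : Type*} [DecidableEq N]
    (μ : X → X → X → X) (f : (N → X) → X) : Prop :=
  ∀ (x : N → X) (i : N) (y : X),
    f x ∈ medInterval μ (x i) (f (Function.update x i y))

/-- `m` is meet-irreducible: whenever `m` is the greatest lower bound of a set `Y`,
`m` itself belongs to `Y`. -/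
def MeetIrred {X : Type*} [Preorder X] (m : X) : Prop :=
  ∀ Y : Set X, IsGLB Y m → m ∈ Y

/-- `j` is join-irreducible: whenever `j` is the least upper bound of a set `Y`,
`j` itself belongs to `Y`. -/
def JoinIrred {X : Type*} [Preorder X] (j : X) : Prop :=
  ∀ Y : Set X, IsLUB Y j → j ∈ Y

/-- Monotonic `M_X`-independence of an aggregation rule. -/
def MonotonicMIndependent {X N : Type*} [Preorder X] (f : (N → X) → X) : Prop :=
  ∀ (x y : N → X) (m : X), MeetIrred m →
    {i | x i ≤ m} ⊆ {i | y i ≤ m} → f x ≤ m → f y ≤ m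

/-- Upper distributivity: every principal order filter `↑u` is a distributive lattice,
expressed by the identity `x ⊔ (y ⊓ z) = (x ⊔ y) ⊓ (x ⊔ z)` for elements above a
common lower bound `u` (meets expressed via `IsGLB`). -/
def UpperDistributive (X : Type*) [SemilatticeSup X] : Prop :=
  ∀ u x y z m₁ m₂ : X, u ≤ x → u ≤ y → u ≤ z →
    IsGLB {y, z} m₁ → IsGLB {x ⊔ y, x ⊔ z} m₂ → x ⊔ m₁ = m₂

/-- Co-coronation (meet-Helly): if the three pairwise meets of `x,y,z` exist then the
meet of `{x,y,z}` exists. -/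
def MeetHelly (X : Type*) [SemilatticeSup X] : Prop :=
  ∀ x y z : X, (∃ a, IsGLB {x, y} a) → (∃ b, IsGLB {y, z} b) →
    (∃ c, IsGLB {x, z} c) → ∃ d, IsGLB ({x, y, z} : Set X) d

/-- `μ` is the median operation: `μ(x,y,z)` is the meet of `x⊔y`, `y⊔z`, `x⊔z`. -/
def IsMedianFn {X : Type*} [SemilatticeSup X] (μ : X → X → X → X) : Prop :=
  ∀ x y z : X, IsGLB {x ⊔ y, y ⊔ z, x ⊔ z} (μ x y z)

/-- Anonymity: invariance of the rule under permutations of the agents. -/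
def Anonymous {X N : Type*} (f : (N → X) → X) : Prop :=
  ∀ (x : N → X) (σ : Equiv.Perm N), f (x ∘ σ) = f x

/-- Bi-idempotence: if every agent proposes one of the two outcomes `y, z`, the rule
selects one of `y, z`. -/
def BiIdempotent {X N : Type*} (f : (N → X) → X) : Prop :=
  ∀ (x : N → X) (y z : X), (∀ i, x i = y ∨ x i = z) → f x = y ∨ f x = z

/-- The co-majority rule: `f(x_N)` is the meet over all majority coalitions `S`
(of size at least `⌊(|N|+2)/2⌋`) of the joins `⋁_{i ∈ S} x_i`. -/
def IsCoMajority {X N : Type*} [SemilatticeSup X] [Fintype N] (f : (N → X) → X) : Prop :=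
  ∀ x : N → X,
    IsGLB {z | ∃ S : Finset N, (Fintype.card N + 2) / 2 ≤ S.card ∧ IsLUB (x '' ↑S) z} (f x)

/-- An order filter of the poset of coalitions `(P(N), ⊆)`. -/
def OrderFilterN {N : Type*} (F : Set (Set N)) : Prop :=
  ∀ S T : Set N, S ∈ F → S ⊆ T → T ∈ F

/-- The locally `m`-winning coalitions of the rule `f`. -/
def winningCoalitions {X N : Type*} [Preorder X] (f : (N → X) → X) (m : X) : Set (Set N) :=
  {T | ∃ x : N → X, {i | x i ≤ m} = T ∧ f x ≤ m}

/-- Shortest-path distance in the covering graph of a partial order. -/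
noncomputable def covDist {X : Type*} [PartialOrder X] (x y : X) : ℕ :=
  sInf {n | ∃ p : ℕ → X, p 0 = x ∧ p n = y ∧ ∀ k < n, p k ⋖ p (k + 1) ∨ p (k + 1) ⋖ p k}

/-- The collection `B_A` of binary relations on `A` satisfying the predicate `P`
(e.g. all reflexive relations, or all irreflexive relations). -/
def RelSub (A : Type*) (P : (A → A → Prop) → Prop) : Type _ :=
  {R : A → A → Prop // P R}

/-- The predicate `P` is closed under pointwise union and intersection of relations
(as are reflexivity and irreflexivity). -/
class RelClosed (A : Type*) (P : (A → A → Prop) → Prop) : Prop where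
  or_closed : ∀ R S : A → A → Prop, P R → P S → P (fun a b => R a b ∨ S a b)
  and_closed : ∀ R S : A → A → Prop, P R → P S → P (fun a b => R a b ∧ S a b)

instance (A : Type*) : RelClosed A (@Reflexive A) where
  or_closed _ _ hR _ := fun a => Or.inl (hR a)
  and_closed _ _ hR hS := fun a => ⟨hR a, hS a⟩

instance (A : Type*) : RelClosed A (@Irreflexive A) where
  or_closed _ _ hR hS := fun a h => h.elim (hR a) (hS a)
  and_closed _ _ hR _ := fun a h => hR a h.1

namespace RelSub

variable {A : Type*} {P : (A → A → Prop) → Prop}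

/-- Relations in `B_A` are ordered by set inclusion. -/
instance : PartialOrder (RelSub A P) where
  le R S := ∀ a b, R.1 a b → S.1 a b
  le_refl R := fun _ _ h => h
  le_trans R S T h₁ h₂ := fun a b h => h₂ a b (h₁ a b h)
  le_antisymm R S h₁ h₂ :=
    Subtype.ext (funext fun a => funext fun b => propext ⟨h₁ a b, h₂ a b⟩)

/-- The lattice median `μ'(R₁,R₂,R₃) = (R₁∪R₂) ∩ (R₂∪R₃) ∩ (R₃∪R₁)`. -/
def median [RelClosed A P] (R₁ R₂ R₃ : RelSub A P) : RelSub A P :=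
  ⟨fun a b => (R₁.1 a b ∨ R₂.1 a b) ∧ (R₂.1 a b ∨ R₃.1 a b) ∧ (R₃.1 a b ∨ R₁.1 a b),
    RelClosed.and_closed _ _ (RelClosed.or_closed _ _ R₁.2 R₂.2)
      (RelClosed.and_closed _ _ (RelClosed.or_closed _ _ R₂.2 R₃.2)
        (RelClosed.or_closed _ _ R₃.2 R₁.2))⟩

end RelSub

/-- Monotonic `J_X`-independence (the dual of monotonic `M_X`-independence). -/
def MonotonicJIndependent {X N : Type*} [Preorder X] (f : (N → X) → X) : Prop :=
  ∀ (x y : N → X) (j : X), JoinIrred j →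
    {i | j ≤ x i} ⊆ {i | j ≤ y i} → j ≤ f x → j ≤ f y

/-- Monotonic independence of irrelevant alternatives for relation-valued rules. -/
def MonotonicIIA {A N : Type*} {P : (A → A → Prop) → Prop}
    (f : (N → RelSub A P) → RelSub A P) : Prop :=
  ∀ (R R' : N → RelSub A P) (u v : A),
    {i | (R i).1 u v} ⊆ {i | (R' i).1 u v} → (f R).1 u v → (f R').1 u v

/-- The Kemeny distance between two relations: the number of ordered pairs in their
symmetric difference. -/
noncomputable def kemenyDist {A : Type*} {P : (A → A → Prop) → Prop}
    (R S : RelSub A P) : ℕ :=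
  Set.ncard {p : A × A |
    (R.1 p.1 p.2 ∧ ¬ S.1 p.1 p.2) ∨ (S.1 p.1 p.2 ∧ ¬ R.1 p.1 p.2)}

/-! The relations in `B_A` are exactly those with a prescribed diagonal, so `B_A` is the
powerset lattice of the off-diagonal pairs. Its meet-irreducibles (join-irreducibles) are the
relations missing (containing) a single off-diagonal pair, which turns monotonic `M`- and
`J`-independence into monotonic IIA. `B_{μ'}`-monotonicity is monotonic IIA for a deviation of
one agent; changing the agents one at a time gives IIA in general. Monotonic IIA yields both
representations with `𝓕 = P(N)`, by evaluating `f` on profiles made of `⊥` and `⊤`.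
Strategy-proofness on every rich domain is `B_{μ'}`-monotonicity: by local unimodality no
deviation beats an outcome of `I(x_i, f(y_i, x_{-i}))`, and the complete preorder ranking `x`
first, then the rest of `I(x,y)`, then everything else makes `y` strictly better than every
outcome outside `I(x,y)`. -/

open Function

namespace Pref

variable {X : Type*}

def ofRank (r : X → ℕ) : Pref X where
  rel u v := r v ≤ r u
  refl _ := le_rfl
  trans _ _ _ h₁ h₂ := h₂.trans h₁

theorem ofRank_strict_iff (r : X → ℕ) (u v : X) : (ofRank r).strict u v ↔ r v < r u :=
  lt_iff_le_not_ge.symm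

end Pref

section Betweenness

variable {X : Type*} (μ : X → X → X → X)

open scoped Classical in
noncomputable def unimodalRank (p q z : X) : ℕ :=
  if z = p then 2 else if z ∈ medInterval μ p q then 1 else 0

variable {μ} {p q : X}

theorem unimodalRank_self : unimodalRank μ p q p = 2 := if_pos rfl

theorem two_le_unimodalRank_iff {z : X} : 2 ≤ unimodalRank μ p q z ↔ z = p := by
  unfold unimodalRank
  split_ifs <;> simp_all

theorem one_le_unimodalRank_iff (hleft : ∀ x y, μ x y x = x) {z : X} :
    1 ≤ unimodalRank μ p q z ↔ z ∈ medInterval μ p q := by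
  unfold unimodalRank
  split_ifs with hzp <;> simp_all [medInterval]

theorem isTop_unimodalRank : (Pref.ofRank (unimodalRank μ p q)).IsTop p := by
  refine ⟨fun z => ?_, fun t ht => (two_le_unimodalRank_iff (μ := μ) (q := q)).1 ?_⟩
  · show unimodalRank μ p q z ≤ unimodalRank μ p q p
    rw [unimodalRank_self]
    unfold unimodalRank
    split_ifs <;> omega
  · exact unimodalRank_self.symm.le.trans (ht p)

theorem locallyUnimodal_unimodalRank (hidem : ∀ x z, μ x x z = x)
    (htrans : ∀ x y q z, z ∈ medInterval μ x y → y ∈ medInterval μ x q →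
      z ∈ medInterval μ x q) :
    LocallyUnimodal μ (Pref.ofRank (unimodalRank μ p q)) := by
  refine ⟨p, isTop_unimodalRank, fun y z hz hzp => ?_⟩
  rw [Pref.ofRank_strict_iff, not_lt]
  have hyp : y ≠ p := by
    rintro rfl
    exact hzp ((hidem y z).symm.trans hz).symm
  unfold unimodalRank
  split_ifs <;> simp_all [htrans p y q z hz]

theorem contour_unimodalRank (hleft : ∀ x y, μ x y x = x) (hright : ∀ x y, μ x y y = y)
    (hidem : ∀ x z, μ x x z = x) :
    {z | (Pref.ofRank (unimodalRank μ p q)).rel z q} = medInterval μ p q := by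
  ext z
  show unimodalRank μ p q q ≤ unimodalRank μ p q z ↔ μ p q z = z
  by_cases hqp : q = p
  · subst hqp
    rw [unimodalRank_self, two_le_unimodalRank_iff, hidem, eq_comm]
  · have hq : unimodalRank μ p q q = 1 := by
      simp [unimodalRank, hqp, medInterval, hright]
    rw [hq, one_le_unimodalRank_iff hleft, medInterval, Set.mem_ofPred_eq]

theorem richDomain_locallyUnimodal (hleft : ∀ x y, μ x y x = x)
    (hright : ∀ x y, μ x y y = y) (hidem : ∀ x z, μ x x z = x)
    (htrans : ∀ x y q z, z ∈ medInterval μ x y → y ∈ medInterval μ x q →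
      z ∈ medInterval μ x q) :
    RichDomain μ {R | LocallyUnimodal μ R ∧ Std.Total R.rel} :=
  ⟨fun _ h => h.1, fun _ _ =>
    ⟨_, ⟨locallyUnimodal_unimodalRank hidem htrans, ⟨fun _ _ => le_total _ _⟩⟩,
      isTop_unimodalRank, contour_unimodalRank hleft hright hidem⟩⟩

variable {N : Type*} [DecidableEq N] {f : (N → X) → X}

theorem BMuMonotonic.strategyProofOn (hf : BMuMonotonic μ f) {D : Set (Pref X)}
    (hD : ∀ R ∈ D, LocallyUnimodal μ R) : StrategyProofOn f D := by
  intro prefs hprefs tops htops i y hgain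
  obtain ⟨t, htop, hunimodal⟩ := hD _ (hprefs i)
  have hti : tops i = t := htop.2 _ (htops i).1
  by_cases hft : f tops = t
  · exact hgain.2 (hft ▸ htop.1 _)
  · exact hunimodal _ _ (hti ▸ hf tops i y) hft hgain

theorem BMuMonotonic.of_strategyProofOn {D : Set (Pref X)} (hD : RichDomain μ D)
    (htotal : ∀ R ∈ D, Std.Total R.rel) (hf : StrategyProofOn f D) : BMuMonotonic μ f := by
  intro x i y
  by_contra hx
  choose prefs hprefs htops hcontour using fun j => hD.2 (x j) (f (update x i y))
  have hnot : ¬ (prefs i).rel (f x) (f (update x i y)) := fun h => hx (hcontour i ▸ h)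
  exact hf prefs hprefs x htops i y
    ⟨((htotal _ (hprefs i)).total _ _).resolve_right hnot, hnot⟩

end Betweenness

namespace RelSub

variable {A : Type*} {P : (A → A → Prop) → Prop}

theorem ext {R S : RelSub A P} (h : ∀ a b, R.1 a b ↔ S.1 a b) : R = S :=
  Subtype.ext (funext fun a => funext fun b => propext (h a b))

theorem le_def {R S : RelSub A P} : R ≤ S ↔ ∀ a b, R.1 a b → S.1 a b := Iff.rfl

section Median

variable [RelClosed A P]

theorem mem_medInterval_iff {x y z : RelSub A P} :
    z ∈ medInterval median x y ↔
      ∀ a b, (x.1 a b ∧ y.1 a b → z.1 a b) ∧ (z.1 a b → x.1 a b ∨ y.1 a b) := by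
  refine ⟨fun h a b => ?_, fun h => ext fun a b => ?_⟩
  · have := congrArg (fun R : RelSub A P => R.1 a b) h
    simp only [median, eq_iff_iff] at this
    tauto
  · have := h a b
    simp only [median]
    tauto

theorem richDomain :
    RichDomain median {R : Pref (RelSub A P) | LocallyUnimodal median R ∧ Std.Total R.rel} :=
  richDomain_locallyUnimodal (fun _ _ => ext fun _ _ => by simp only [median]; tauto)
    (fun _ _ => ext fun _ _ => by simp only [median]; tauto)
    (fun _ _ => ext fun _ _ => by simp only [median]; tauto)
    fun _ _ _ _ h₁ h₂ => mem_medInterval_iff.2 fun a b => by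
      have := mem_medInterval_iff.1 h₁ a b
      have := mem_medInterval_iff.1 h₂ a b
      tauto

variable {N : Type*} [DecidableEq N] {f : (N → RelSub A P) → RelSub A P}

theorem _root_.MonotonicIIA.bMuMonotonic (hf : MonotonicIIA f) : BMuMonotonic median f := by
  intro x i y
  refine mem_medInterval_iff.2 fun a b => ⟨fun ⟨hxi, hfy⟩ => hf _ x a b (fun j hj => ?_) hfy,
    fun hfx => or_iff_not_imp_left.2 fun hxi => hf x _ a b (fun j hj => ?_) hfx⟩
  · rcases eq_or_ne j i with rfl | hji
    · exact hxi
    · simpa [update_of_ne hji] using hj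
  · have hji : j ≠ i := by rintro rfl; exact hxi hj
    simpa [update_of_ne hji] using hj

theorem _root_.BMuMonotonic.apply_update (hf : BMuMonotonic median f) (x : N → RelSub A P)
    (i : N) (z : RelSub A P) {a b : A} (hz : (x i).1 a b → z.1 a b) (hx : (f x).1 a b) :
    (f (update x i z)).1 a b := by
  rcases (mem_medInterval_iff.1 (hf x i z) a b).2 hx with hxi | hfz
  · have hback := hf (update x i z) i (x i)
    rw [update_idem, update_eq_self, update_self] at hback
    exact (mem_medInterval_iff.1 hback a b).1 ⟨hz hxi, hx⟩
  · exact hfz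

theorem _root_.BMuMonotonic.monotonicIIA [Fintype N] (hf : BMuMonotonic median f) :
    MonotonicIIA f := by
  intro R R' a b hsub hR
  have hpiece : ∀ s : Finset N, (f (s.piecewise R' R)).1 a b := by
    intro s
    induction s using Finset.induction_on with
    | empty => simpa using hR
    | insert j s hj ih =>
      rw [Finset.piecewise_insert]
      refine hf.apply_update _ j _ (fun h => hsub ?_) ih
      rwa [Finset.piecewise_eq_of_notMem _ _ _ hj] at h
  simpa using hpiece Finset.univ

end Median

section Representation

variable {N : Type*} {f : (N → RelSub A P) → RelSub A P}

open scoped Classical in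
theorem _root_.MonotonicIIA.apply_iff_forall [BoundedOrder (RelSub A P)]
    (hf : MonotonicIIA f) (R : N → RelSub A P) (a b : A) :
    (f R).1 a b ↔
      ∀ S : Set N,
        (∃ i ∈ S, (R i).1 a b) ∨ (f fun i => if i ∈ S then ⊥ else ⊤).1 a b := by
  refine ⟨fun hR S => or_iff_not_imp_left.2 fun hS => hf R _ a b (fun i hi => ?_) hR,
    fun h => ?_⟩
  · have hiS : i ∉ S := fun hiS => hS ⟨i, hiS, hi⟩
    rw [Set.mem_ofPred_eq, if_neg hiS]
    exact le_def.1 le_top a b hi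
  · rcases h {i | ¬ (R i).1 a b} with ⟨i, hi, hRi⟩ | hbot
    · exact absurd hRi hi
    · refine hf _ R a b (fun i hi => by_contra fun hRi => ?_) hbot
      rw [Set.mem_ofPred_eq, if_pos (by exact hRi)] at hi
      exact hRi (le_def.1 bot_le a b hi)

open scoped Classical in
theorem _root_.MonotonicIIA.apply_iff_exists [BoundedOrder (RelSub A P)]
    (hf : MonotonicIIA f) (R : N → RelSub A P) (a b : A) :
    (f R).1 a b ↔
      ∃ S : Set N,
        (∀ i ∈ S, (R i).1 a b) ∧ (f fun i => if i ∈ S then ⊤ else ⊥).1 a b := by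
  refine ⟨fun hR => ⟨{i | (R i).1 a b}, fun _ hi => hi, hf R _ a b (fun i hi => ?_) hR⟩,
    fun ⟨S, hS, htop⟩ => hf _ R a b (fun i hi => ?_) htop⟩
  · rw [Set.mem_ofPred_eq, if_pos hi]
    exact le_def.1 le_top a b hi
  · by_cases hiS : i ∈ S
    · exact hS i hiS
    · rw [Set.mem_ofPred_eq, if_neg hiS] at hi
      exact le_def.1 bot_le a b hi

theorem monotonicIIA_of_forall {F : Set (Set N)} {Rs : Set N → RelSub A P}
    (hrep : ∀ (R : N → RelSub A P) (a b : A),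
      (f R).1 a b ↔ ∀ S ∈ F, (∃ i ∈ S, (R i).1 a b) ∨ (Rs S).1 a b) :
    MonotonicIIA f := by
  intro R R' a b hsub hR
  rw [hrep] at hR ⊢
  exact fun S hS => (hR S hS).imp_left fun ⟨i, hi, hRi⟩ => ⟨i, hi, hsub hRi⟩

theorem monotonicIIA_of_exists {F : Set (Set N)} {Rs : Set N → RelSub A P}
    (hrep : ∀ (R : N → RelSub A P) (a b : A),
      (f R).1 a b ↔ ∃ S ∈ F, (∀ i ∈ S, (R i).1 a b) ∧ (Rs S).1 a b) :
    MonotonicIIA f := by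
  intro R R' a b hsub hR
  rw [hrep] at hR ⊢
  obtain ⟨S, hS, hRS, hRs⟩ := hR
  exact ⟨S, hS, fun i hi => hsub (hRS i hi), hRs⟩

end Representation

theorem prop_iff_diag (hP : P = @Reflexive A ∨ P = @Irreflexive A) (S : A → A → Prop) :
    P S ↔ ∀ a, S a a ↔ P (@Eq A) := by
  rcases hP with rfl | rfl
  · exact ⟨fun hS a => iff_of_true (hS a) fun _ => rfl, fun h a => (h a).2 fun _ => rfl⟩
  · exact ⟨fun hS a => iff_of_false (hS a) fun h => h a rfl, fun h a haa => (h a).1 haa a rfl⟩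

section Diagonal

variable {d : Prop} (hd : ∀ S : A → A → Prop, P S ↔ ∀ a, S a a ↔ d)
include hd

theorem diag_iff (R : RelSub A P) (a : A) : R.1 a a ↔ d := (hd _).1 R.2 a

abbrev boundedOrder : BoundedOrder (RelSub A P) where
  top := ⟨fun a b => a ≠ b ∨ d, (hd _).2 fun _ => by simp⟩
  le_top R a b h := by
    rcases eq_or_ne a b with rfl | hab
    · exact Or.inr ((diag_iff hd R a).1 h)
    · exact Or.inl hab
  bot := ⟨fun a b => a = b ∧ d, (hd _).2 fun _ => by simp⟩
  bot_le R _ _ := fun ⟨hab, h⟩ => hab ▸ (diag_iff hd R _).2 h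

def coatom (a b : A) : RelSub A P :=
  ⟨fun u v => (u = v ∧ d) ∨ (u ≠ v ∧ ¬(u = a ∧ v = b)), (hd _).2 fun _ => by simp⟩

def atom (a b : A) : RelSub A P :=
  ⟨fun u v => (u = v ∧ d) ∨ (u ≠ v ∧ u = a ∧ v = b), (hd _).2 fun _ => by simp⟩

theorem le_coatom_iff {a b : A} (hab : a ≠ b) {R : RelSub A P} :
    R ≤ coatom hd a b ↔ ¬ R.1 a b := by
  refine ⟨fun h hR => ?_, fun h u v hR => ?_⟩
  · rcases h a b hR with ⟨hab', -⟩ | ⟨-, hne⟩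
    · exact hab hab'
    · exact hne ⟨rfl, rfl⟩
  · rcases eq_or_ne u v with rfl | huv
    · exact Or.inl ⟨rfl, (diag_iff hd R u).1 hR⟩
    · exact Or.inr ⟨huv, by rintro ⟨rfl, rfl⟩; exact h hR⟩

theorem atom_le_iff {a b : A} (hab : a ≠ b) {R : RelSub A P} :
    atom hd a b ≤ R ↔ R.1 a b := by
  refine ⟨fun h => h a b (Or.inr ⟨hab, rfl, rfl⟩), fun h u v => ?_⟩
  rintro (⟨rfl, hd'⟩ | ⟨-, rfl, rfl⟩)
  · exact (diag_iff hd R u).2 hd'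
  · exact h

theorem meetIrred_coatom {a b : A} (hab : a ≠ b) : MeetIrred (coatom hd a b) := by
  intro Y hY
  by_contra hm
  let := boundedOrder hd
  -- every element of `Y` lies strictly above the coatom, hence is the whole top relation
  have htop : (⊤ : RelSub A P) ∈ lowerBounds Y := by
    intro y hy u v huv
    by_cases hpair : u = a ∧ v = b
    · obtain ⟨rfl, rfl⟩ := hpair
      by_contra hy'
      exact hm (le_antisymm ((le_coatom_iff hd hab).2 hy') (hY.1 hy) ▸ hy)
    · refine hY.1 hy u v ?_
      rcases eq_or_ne u v with rfl | hne
      · exact Or.inl ⟨rfl, huv.resolve_left (· rfl)⟩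
      · exact Or.inr ⟨hne, hpair⟩
  exact (le_coatom_iff hd hab).1 (hY.2 htop) (Or.inl hab)

theorem joinIrred_atom {a b : A} (hab : a ≠ b) : JoinIrred (atom hd a b) := by
  intro Y hY
  by_contra hm
  let := boundedOrder hd
  have hbot : (⊥ : RelSub A P) ∈ upperBounds Y := by
    intro y hy u v hyuv
    rcases hY.1 hy u v hyuv with hdiag | ⟨-, rfl, rfl⟩
    · exact hdiag
    · exact absurd (le_antisymm (hY.1 hy) ((atom_le_iff hd hab).2 hyuv) ▸ hy) hm
  exact hab ((atom_le_iff hd hab).1 (hY.2 hbot)).1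

theorem exists_eq_coatom_of_meetIrred {m : RelSub A P} (hm : MeetIrred m) :
    ∃ a b, a ≠ b ∧ m = coatom hd a b := by
  have hglb : IsGLB {z | ∃ a b, a ≠ b ∧ ¬ m.1 a b ∧ z = coatom hd a b} m := by
    refine ⟨fun z ⟨a, b, hab, hmab, hz⟩ => hz ▸ (le_coatom_iff hd hab).2 hmab,
      fun z hz u v hzuv => ?_⟩
    rcases eq_or_ne u v with rfl | huv
    · exact (diag_iff hd m u).2 ((diag_iff hd z u).1 hzuv)
    · by_contra hmuv
      exact (le_coatom_iff hd huv).1 (hz ⟨u, v, huv, hmuv, rfl⟩) hzuv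
  obtain ⟨a, b, hab, -, h⟩ := hm _ hglb
  exact ⟨a, b, hab, h⟩

theorem exists_eq_atom_of_joinIrred {j : RelSub A P} (hj : JoinIrred j) :
    ∃ a b, a ≠ b ∧ j = atom hd a b := by
  have hlub : IsLUB {z | ∃ a b, a ≠ b ∧ j.1 a b ∧ z = atom hd a b} j := by
    refine ⟨fun z ⟨a, b, hab, hjab, hz⟩ => hz ▸ (atom_le_iff hd hab).2 hjab,
      fun z hz u v hjuv => ?_⟩
    rcases eq_or_ne u v with rfl | huv
    · exact (diag_iff hd z u).2 ((diag_iff hd j u).1 hjuv)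
    · exact (atom_le_iff hd huv).1 (hz ⟨u, v, huv, hjuv, rfl⟩)
  obtain ⟨a, b, hab, -, h⟩ := hj _ hlub
  exact ⟨a, b, hab, h⟩

variable {N : Type*} {f : (N → RelSub A P) → RelSub A P}

theorem monotonicMIndependent_iff_monotonicIIA : MonotonicMIndependent f ↔ MonotonicIIA f := by
  refine ⟨fun hM R R' a b hsub hR => ?_, fun hIIA x y m hm hsub hx => ?_⟩
  · rcases eq_or_ne a b with rfl | hab
    · exact (diag_iff hd _ a).2 ((diag_iff hd _ a).1 hR)
    · by_contra hR'
      refine (le_coatom_iff hd hab).1 (hM R' R _ (meetIrred_coatom hd hab) (fun i hi => ?_)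
        ((le_coatom_iff hd hab).2 hR')) hR
      exact (le_coatom_iff hd hab).2 fun h => (le_coatom_iff hd hab).1 hi (hsub h)
  · obtain ⟨a, b, hab, rfl⟩ := exists_eq_coatom_of_meetIrred hd hm
    refine (le_coatom_iff hd hab).2 fun hy =>
      (le_coatom_iff hd hab).1 hx (hIIA y x a b (fun i hi => ?_) hy)
    exact by_contra fun hxi => (le_coatom_iff hd hab).1 (hsub ((le_coatom_iff hd hab).2 hxi)) hi

theorem monotonicJIndependent_iff_monotonicIIA : MonotonicJIndependent f ↔ MonotonicIIA f := by
  refine ⟨fun hJ R R' a b hsub hR => ?_, fun hIIA x y j hj hsub hx => ?_⟩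
  · rcases eq_or_ne a b with rfl | hab
    · exact (diag_iff hd _ a).2 ((diag_iff hd _ a).1 hR)
    · refine (atom_le_iff hd hab).1 (hJ R R' _ (joinIrred_atom hd hab) (fun i hi => ?_)
        ((atom_le_iff hd hab).2 hR))
      exact (atom_le_iff hd hab).2 (hsub ((atom_le_iff hd hab).1 hi))
  · obtain ⟨a, b, hab, rfl⟩ := exists_eq_atom_of_joinIrred hd hj
    refine (atom_le_iff hd hab).2 (hIIA x y a b (fun i hi => ?_) ((atom_le_iff hd hab).1 hx))
    exact (atom_le_iff hd hab).1 (hsub ((atom_le_iff hd hab).2 hi))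

end Diagonal

end RelSub

theorem relRules_strategyProof_tfae_general
    (A : Type*)
    (P : (A → A → Prop) → Prop) [RelClosed A P]
    (hP : P = @Reflexive A ∨ P = @Irreflexive A)
    {N : Type*} [Fintype N] [DecidableEq N]
    (f : (N → RelSub A P) → RelSub A P) :
    List.TFAE
      [∀ D : Set (Pref (RelSub A P)),
          RichDomain (RelSub.median (P := P)) D → StrategyProofOn f D,
        BMuMonotonic (RelSub.median (P := P)) f,
        MonotonicMIndependent f,
        MonotonicJIndependent f,
        MonotonicIIA f,
        ∃ (F : Set (Set N)) (Rs : Set N → RelSub A P), OrderFilterN F ∧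
          ∀ (R : N → RelSub A P) (a b : A),
            (f R).1 a b ↔ ∀ S ∈ F, (∃ i ∈ S, (R i).1 a b) ∨ (Rs S).1 a b,
        ∃ (F : Set (Set N)) (Rs : Set N → RelSub A P), OrderFilterN F ∧
          ∀ (R : N → RelSub A P) (a b : A),
            (f R).1 a b ↔ ∃ S ∈ F, (∀ i ∈ S, (R i).1 a b) ∧ (Rs S).1 a b] := by
  have hd := RelSub.prop_iff_diag hP
  let := RelSub.boundedOrder hd
  tfae_have 1 → 2 := fun h => BMuMonotonic.of_strategyProofOn RelSub.richDomain
    (fun _ hR => hR.2) (h _ RelSub.richDomain)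
  tfae_have 2 → 1 := fun h _ hD => h.strategyProofOn hD.1
  tfae_have 2 → 5 := BMuMonotonic.monotonicIIA
  tfae_have 5 → 2 := MonotonicIIA.bMuMonotonic
  tfae_have 3 ↔ 5 := RelSub.monotonicMIndependent_iff_monotonicIIA hd
  tfae_have 4 ↔ 5 := RelSub.monotonicJIndependent_iff_monotonicIIA hd
  tfae_have 5 → 6 := fun h =>
    ⟨Set.univ, _, fun _ _ _ _ => trivial, fun R a b => by simpa using h.apply_iff_forall R a b⟩
  tfae_have 6 → 5 := fun ⟨_, _, _, hrep⟩ => RelSub.monotonicIIA_of_forall hrep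
  tfae_have 5 → 7 := fun h =>
    ⟨Set.univ, _, fun _ _ _ _ => trivial, fun R a b => by simpa using h.apply_iff_exists R a b⟩
  tfae_have 7 → 5 := fun ⟨_, _, _, hrep⟩ => RelSub.monotonicIIA_of_exists hrep
  tfae_finish

/-- **Proposition 4.** For `B_A` the (bounded distributive lattice of) reflexive — or
irreflexive — binary relations on a nonempty finite set `A` with median `μ'`, an
aggregation rule `f : B_A^N → B_A` satisfies the following equivalent conditions:
strategy-proofness on every rich locally unimodal domain, `B_{μ'}`-monotonicity,
monotonic `M`-independence, monotonic `J`-independence, monotonic IIA, and the two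
order-filter representations
`f(R_N) = ⋂_{S∈𝓕}((⋃_{i∈S}R_i) ∪ R_S)` and `f(R_N) = ⋃_{S∈𝓕}((⋂_{i∈S}R_i) ∩ R_S)`. -/
theorem relRules_strategyProof_tfae
    (A : Type*) [Fintype A] [Nonempty A]
    (P : (A → A → Prop) → Prop) [RelClosed A P]
    (hP : P = @Reflexive A ∨ P = @Irreflexive A)
    {N : Type*} [Fintype N] [DecidableEq N]
    (f : (N → RelSub A P) → RelSub A P) :
    List.TFAE
      [∀ D : Set (Pref (RelSub A P)),
          RichDomain (RelSub.median (P := P)) D → StrategyProofOn f D,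
        BMuMonotonic (RelSub.median (P := P)) f,
        MonotonicMIndependent f,
        MonotonicJIndependent f,
        MonotonicIIA f,
        ∃ (F : Set (Set N)) (Rs : Set N → RelSub A P), OrderFilterN F ∧
          ∀ (R : N → RelSub A P) (a b : A),
            (f R).1 a b ↔ ∀ S ∈ F, (∃ i ∈ S, (R i).1 a b) ∨ (Rs S).1 a b,
        ∃ (F : Set (Set N)) (Rs : Set N → RelSub A P), OrderFilterN F ∧
          ∀ (R : N → RelSub A P) (a b : A),
            (f R).1 a b ↔ ∃ S ∈ F, (∀ i ∈ S, (R i).1 a b) ∧ (Rs S).1 a b] :=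
  relRules_strategyProof_tfae_general A P hP f
end

section
/- Let A be a nonempty finite set, N a finite set with |N| odd, and let f^∂maj : (R_A^T)^N → R_A^T be the co-majority rule on the median join-semilattice of total preorders on A, f^∂maj(R_N) = ⋀_{S ∈ W^maj} (⋁_{i∈S} R_i) with W^maj = {S ⊆ N : |S| ≥ ⌊(|N|+2)/2⌋}. Then f^∂maj satisfies the weak Condorcet principle: for every profile (R_i)_{i∈N} of total preorders and every x ∈ A, if x is a Condorcet winner — i.e. for every y ∈ A∖{x} the coalition {i ∈ N : x R_i y and not y R_i x} belongs to W^maj — then x is a maximum of the total preorder f^∂maj((R_i)_{i∈N}), i.e. x f^∂maj((R_i)_{i∈N}) y for all y ∈ A. -/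
/-- The set of total preorders (reflexive, transitive, total relations) on `A`. -/
def TotalPreorderOn (A : Type*) : Type _ :=
  {R : A → A → Prop // Reflexive R ∧ Transitive R ∧ Total R}

namespace TotalPreorderOn

variable {A : Type*}

/-- Total preorders are ordered by set inclusion of relations. -/
instance : PartialOrder (TotalPreorderOn A) where
  le R S := ∀ a b, R.1 a b → S.1 a b
  le_refl R := fun _ _ h => h
  le_trans R S T h₁ h₂ := fun a b h => h₂ a b (h₁ a b h)
  le_antisymm R S h₁ h₂ :=
    Subtype.ext (funext fun a => funext fun b => propext ⟨h₁ a b, h₂ a b⟩)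

/-- The join of two total preorders: the transitive closure of their union. -/
def join (R S : TotalPreorderOn A) : TotalPreorderOn A :=
  ⟨Relation.ReflTransGen (fun a b => R.1 a b ∨ S.1 a b),
    fun _ => Relation.ReflTransGen.refl,
    fun _ _ _ h₁ h₂ => Relation.ReflTransGen.trans h₁ h₂,
    fun a b => (R.2.2.2 a b).imp
      (fun h => Relation.ReflTransGen.single (Or.inl h))
      (fun h => Relation.ReflTransGen.single (Or.inl h))⟩

theorem le_def {R S : TotalPreorderOn A} : R ≤ S ↔ ∀ a b, R.1 a b → S.1 a b :=
  Iff.rfl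

/-- `(R_A^T, ∨)` is a join-semilattice, with join the transitive closure of union. -/
instance : SemilatticeSup (TotalPreorderOn A) where
  sup := join
  le_sup_left R S := fun _ _ h => Relation.ReflTransGen.single (Or.inl h)
  le_sup_right R S := fun _ _ h => Relation.ReflTransGen.single (Or.inr h)
  sup_le R S T h₁ h₂ := by
    intro a b h
    induction h with
    | refl => exact T.2.1 a
    | @tail b c _ hstep ih => exact T.2.2.1 ih (hstep.elim (h₁ _ _) (h₂ _ _))

/-- The universal relation is the top total preorder. -/
instance : OrderTop (TotalPreorderOn A) where
  top := ⟨fun _ _ => True, fun _ => trivial, fun _ _ _ _ _ => trivial,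
    fun _ _ => Or.inl trivial⟩
  le_top _ := fun _ _ _ => trivial

instance [Finite A] : Finite (TotalPreorderOn A) := by
  unfold TotalPreorderOn; infer_instance

theorem sup_def (R S : TotalPreorderOn A) :
    R ⊔ S = join R S := rfl

end TotalPreorderOn

/-- The co-majority rule for an odd number of agents on the semilattice of total
preorders satisfies the weak Condorcet principle: if `x` is a Condorcet winner at a
profile (for every `y ≠ x` a majority coalition strictly prefers `x` to `y`), then
`x` is a maximum of the social preference. -/
theorem coMajority_weak_condorcet
    (A : Type*) [Fintype A] [Nonempty A] {N : Type*} [Fintype N]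
    (hodd : Odd (Fintype.card N))
    (f : (N → TotalPreorderOn A) → TotalPreorderOn A)
    (hf : IsCoMajority f) :
    ∀ (R : N → TotalPreorderOn A) (x : A),
      (∀ y : A, y ≠ x →
        (Fintype.card N + 2) / 2 ≤ Set.ncard {i | (R i).1 x y ∧ ¬ (R i).1 y x}) →
      ∀ y : A, (f R).1 x y := by
  classical
  intro R x hcond y
  have hglb := hf R
  -- every element of the co-majority family relates x to everything
  have key : ∀ z ∈ {z | ∃ S : Finset N, (Fintype.card N + 2) / 2 ≤ S.card ∧
      IsLUB (R '' ↑S) z}, ∀ b, z.1 x b := by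
    rintro z ⟨S, hS, hlub⟩ b
    by_cases hb : b = x
    · rw [hb]; exact z.2.1 x
    · have hb' := hcond b hb
      set T : Finset N := Set.toFinset {i | (R i).1 x b ∧ ¬ (R i).1 b x} with hT
      have hTcard : (Fintype.card N + 2) / 2 ≤ T.card := by
        rwa [Set.ncard_eq_toFinset_card'] at hb'
      have hodd' := hodd
      obtain ⟨k, hk⟩ := hodd'
      have hcard : 1 ≤ (S ∩ T).card := by
        have h1 : (S ∪ T).card + (S ∩ T).card = S.card + T.card :=
          Finset.card_union_add_card_inter S T
        have h2 : (S ∪ T).card ≤ Fintype.card N := Finset.card_le_univ _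
        omega
      obtain ⟨i, hi⟩ := Finset.card_pos.mp hcard
      rw [Finset.mem_inter] at hi
      have hRi : R i ≤ z := hlub.1 ⟨i, hi.1, rfl⟩
      have hixb : (R i).1 x b := by
        have := hi.2
        rw [hT, Set.mem_toFinset] at this
        exact this.1
      exact hRi x b hixb
  -- the preorder f R with x promoted to the top
  let w : TotalPreorderOn A :=
    ⟨fun a b => a = x ∨ (b ≠ x ∧ (f R).1 a b), by
      intro a
      by_cases ha : a = x
      · exact Or.inl ha
      · exact Or.inr ⟨ha, (f R).2.1 a⟩, by
      rintro a b c (rfl | ⟨hb, hab⟩) hbc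
      · exact Or.inl rfl
      · rcases hbc with rfl | ⟨hc, hbc⟩
        · exact absurd rfl hb
        · exact Or.inr ⟨hc, (f R).2.2.1 hab hbc⟩, by
      intro a b
      by_cases ha : a = x
      · exact Or.inl (Or.inl ha)
      · by_cases hb : b = x
        · exact Or.inr (Or.inl hb)
        · rcases (f R).2.2.2 a b with h | h
          · exact Or.inl (Or.inr ⟨hb, h⟩)
          · exact Or.inr (Or.inr ⟨ha, h⟩)⟩
  have hw : w ∈ lowerBounds {z | ∃ S : Finset N, (Fintype.card N + 2) / 2 ≤ S.card ∧
      IsLUB (R '' ↑S) z} := by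
    rintro z hz a b (rfl | ⟨hb, hab⟩)
    · exact key z hz b
    · exact hglb.1 hz a b hab
  exact hglb.2 hw x y (Or.inl rfl)
end

section
/- Let (X,≤) be a finite join-semilattice with set M_X of meet-irreducible elements, and let f : X^N → X be an aggregation rule. Then f is monotonically M_X-independent if and only if f is both M_X-independent and isotonic. Here: f is M_X-independent if for all profiles x_N, y_N and all m ∈ M_X, {i : x_i ≤ m} = {i : y_i ≤ m} implies (f(x_N) ≤ m ⟺ f(y_N) ≤ m); f is isotonic if x_i ≤ x_i' for each i implies f(x_N) ≤ f(x_N'); and f is monotonically M_X-independent if for all x_N, y_N and m ∈ M_X, {i : x_i ≤ m} ⊆ {i : y_i ≤ m} and f(x_N) ≤ m imply f(y_N) ≤ m. -/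
/-- `M_X`-independence: profiles agreeing on who proposes below `m` yield the same
verdict w.r.t. `m`. -/
def MIndependent {X N : Type*} [Preorder X] (f : (N → X) → X) : Prop :=
  ∀ (x y : N → X) (m : X), MeetIrred m →
    {i | x i ≤ m} = {i | y i ≤ m} → (f x ≤ m ↔ f y ≤ m)

/-- Isotony: `f` is order-preserving. -/
def Isotonic {X N : Type*} [Preorder X] (f : (N → X) → X) : Prop :=
  ∀ x y : N → X, (∀ i, x i ≤ y i) → f x ≤ f y

/-- In a finite join-semilattice, every element is the infimum of the
meet-irreducible elements above it: if `z` is below all meet-irreducibles above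
`y`, then `z ≤ y`. -/
lemma le_of_forall_meetIrred {X : Type*} [SemilatticeSup X] [Fintype X]
    (z y : X) (h : ∀ m, MeetIrred m → y ≤ m → z ≤ m) : z ≤ y := by
  induction y using WellFoundedGT.induction with
  | _ y ih =>
    by_cases hy : MeetIrred y
    · exact h y hy le_rfl
    · simp only [MeetIrred, not_forall] at hy
      obtain ⟨Y, hglb, hnot⟩ := hy
      refine hglb.2 (fun u hu => ?_)
      have hyu : y < u := lt_of_le_of_ne (hglb.1 hu) (fun e => hnot (e ▸ hu))
      exact ih u hyu (fun m hm hum => h m hm (hyu.le.trans hum))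

/-- In a finite join-semilattice, an aggregation rule is monotonically
`M_X`-independent iff it is both `M_X`-independent and isotonic. -/
theorem monotonicMIndependent_iff_mIndependent_and_isotonic
    {X N : Type*} [SemilatticeSup X] [Fintype X] [Fintype N]
    (f : (N → X) → X) :
    MonotonicMIndependent f ↔ (MIndependent f ∧ Isotonic f) := by
  constructor
  · intro hmono
    constructor
    · intro x y m hm hset
      exact ⟨hmono x y m hm hset.le, hmono y x m hm hset.ge⟩
    · intro x y hxy
      refine le_of_forall_meetIrred _ _ (fun m hm hfy => ?_)
      exact hmono y x m hm (fun i hi => le_trans (hxy i) hi) hfy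
  · rintro ⟨hind, hiso⟩ x y m hm hsub hfx
    classical
    set w : N → X := fun i => if x i ≤ m then y i else x i ⊔ y i with hw
    have hset : {i | x i ≤ m} = {i | w i ≤ m} := by
      ext i
      simp only [Set.mem_setOf_eq, hw]
      by_cases hxi : x i ≤ m
      · have hyi : y i ≤ m := hsub hxi
        simp [hxi, hyi]
      · simp only [hxi, if_neg, if_false, iff_false, false_iff]
        exact fun hle => hxi (le_trans le_sup_left hle)
    have hyw : ∀ i, y i ≤ w i := by
      intro i
      by_cases hxi : x i ≤ m
      · simp [hw, hxi]
      · simp [hw, hxi]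
    exact le_trans (hiso y w hyw) ((hind x w m hm hset).mp hfx)
end

section
/- Let (X,≤) be a finite upper distributive join-semilattice (for every u ∈ X the principal order filter ↑u is a distributive lattice). Then: (i) (X,≤) is graded, i.e. it admits a rank function r : X → ℤ≥0 such that r(y) = r(x) + 1 whenever y covers x; and (ii) the rank function is a valuation: for all x,y ∈ X, if the meet x∧y exists then r(x) + r(y) = r(x∨y) + r(x∧y). -/
/-!
The rank of `x` is the number of meet-irreducible elements (those with a unique upper cover)
that are not above `x`. Upper distributivity makes every meet-irreducible `m` meet-prime: if
`x ⊓ y ≤ m` then `x ≤ m` or `y ≤ m`. Hence the meet-irreducibles not above `x ⊔ y`, resp. `x ⊓ y`,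
are the union, resp. the intersection, of those not above `x` and those not above `y`, and the
valuation identity is inclusion–exclusion. Along a cover `x ⋖ y` exactly one meet-irreducible is
above `x` but not above `y`: a maximal element above `x` avoiding `y` has `m ⊔ y` as its unique
cover, and two such elements `m, m'` both meet `y` in `x`, so primeness makes them comparable
both ways.
-/

section UpperDistributiveRank

variable {X : Type*} [SemilatticeSup X]

def HasUniqueCover (m : X) : Prop := ∃! c, m ⋖ c

def irreduciblesNotAbove (x : X) : Set X := {m | HasUniqueCover m ∧ ¬ x ≤ m}

theorem exists_isGLB_pair_of_le [Finite X] {u a b : X} (ha : u ≤ a) (hb : u ≤ b) :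
    ∃ g, u ≤ g ∧ IsGLB {a, b} g := by
  obtain ⟨g, hug, hg⟩ :=
    Finite.exists_le_maximal (p := (· ∈ lowerBounds ({a, b} : Set X))) (a := u) (by simp [ha, hb])
  refine ⟨g, hug, hg.prop, fun z hz => ?_⟩
  have hzg : z ⊔ g ∈ lowerBounds ({a, b} : Set X) := fun t ht => sup_le (hz ht) (hg.prop ht)
  exact le_sup_left.trans (hg.le_of_ge hzg le_sup_right)

theorem CovBy.isGLB_pair_of_not_le {x y a : X} (hxy : x ⋖ y) (hxa : x ≤ a)
    (hya : ¬ y ≤ a) : IsGLB {a, y} x := by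
  refine ⟨by simp [hxa, hxy.le], fun z hz => ?_⟩
  have hza : z ≤ a := hz (by simp)
  have hzy : z ≤ y := hz (by simp)
  rcases hxy.eq_or_eq le_sup_right (sup_le hzy hxy.le) with h | h
  · exact h ▸ le_sup_left
  · exact absurd (h ▸ sup_le hza hxa) hya

theorem HasUniqueCover.le_of_covBy_of_lt [Finite X] {m c z : X} (hm : HasUniqueCover m)
    (hc : m ⋖ c) (hmz : m < z) : c ≤ z := by
  obtain ⟨c', hc', hc'z⟩ := exists_covBy_le_of_lt hmz
  exact hm.unique hc hc' ▸ hc'z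

theorem HasUniqueCover.le_or_le_of_isGLB [Finite X] (hud : UpperDistributive X) {m x y g : X}
    (hm : HasUniqueCover m) (hg : IsGLB {x, y} g) (hgm : g ≤ m) : x ≤ m ∨ y ≤ m := by
  by_contra! hxy
  obtain ⟨c, hc⟩ := hm.exists
  have hmx : m < m ⊔ x := left_lt_sup.2 hxy.1
  have hmy : m < m ⊔ y := left_lt_sup.2 hxy.2
  obtain ⟨g', -, hg'⟩ := exists_isGLB_pair_of_le hmx.le hmy.le
  have hg'm : m = g' := by
    rw [← hud g m x y g g' hgm (hg.1 (by simp)) (hg.1 (by simp)) hg hg', sup_eq_left.2 hgm]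
  have hcg' : c ≤ g' := hg'.2 <| by
    simp [hm.le_of_covBy_of_lt hc hmx, hm.le_of_covBy_of_lt hc hmy]
  exact hc.lt.not_ge (hg'm ▸ hcg')

theorem exists_hasUniqueCover_of_not_le [Finite X] {x y : X} (hyx : ¬ y ≤ x) :
    ∃ m, HasUniqueCover m ∧ x ≤ m ∧ ¬ y ≤ m := by
  obtain ⟨m, hxm, hmax⟩ := Finite.exists_le_maximal (p := fun z => x ≤ z ∧ ¬ y ≤ z) ⟨le_rfl, hyx⟩
  have hmy : m < m ⊔ y := left_lt_sup.2 hmax.prop.2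
  have hcover : ∀ c, m ⋖ c → c = m ⊔ y := by
    intro c hc
    have hyc : y ≤ c := by
      by_contra hyc
      exact hc.lt.not_ge (hmax.le_of_ge ⟨hmax.prop.1.trans hc.le, hyc⟩ hc.le)
    exact ((hc.eq_or_eq le_sup_left (sup_le hc.le hyc)).resolve_left hmy.ne').symm
  obtain ⟨c, hc, -⟩ := exists_covBy_le_of_lt hmy
  exact ⟨m, ⟨c, hc, fun c' hc' => (hcover c' hc').trans (hcover c hc).symm⟩, hmax.prop⟩

theorem HasUniqueCover.eq_of_covBy [Finite X] (hud : UpperDistributive X) {x y m m' : X}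
    (hxy : x ⋖ y) (hm : HasUniqueCover m) (hxm : x ≤ m) (hym : ¬ y ≤ m)
    (hm' : HasUniqueCover m') (hxm' : x ≤ m') (hym' : ¬ y ≤ m') : m = m' :=
  le_antisymm
    ((hm'.le_or_le_of_isGLB hud (hxy.isGLB_pair_of_not_le hxm hym) hxm').resolve_right hym')
    ((hm.le_or_le_of_isGLB hud (hxy.isGLB_pair_of_not_le hxm' hym') hxm).resolve_right hym)

theorem irreduciblesNotAbove_sup (x y : X) :
    irreduciblesNotAbove (x ⊔ y) = irreduciblesNotAbove x ∪ irreduciblesNotAbove y := by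
  ext m
  simp only [irreduciblesNotAbove, Set.mem_ofPred_eq, Set.mem_union, sup_le_iff]
  tauto

theorem irreduciblesNotAbove_of_isGLB [Finite X] (hud : UpperDistributive X) {x y g : X}
    (hg : IsGLB {x, y} g) :
    irreduciblesNotAbove g = irreduciblesNotAbove x ∩ irreduciblesNotAbove y := by
  ext m
  simp only [irreduciblesNotAbove, Set.mem_ofPred_eq, Set.mem_inter_iff]
  constructor
  · rintro ⟨hm, hgm⟩
    exact ⟨⟨hm, fun hxm => hgm ((hg.1 (by simp)).trans hxm)⟩,
      ⟨hm, fun hym => hgm ((hg.1 (by simp)).trans hym)⟩⟩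
  · rintro ⟨⟨hm, hxm⟩, -, hym⟩
    exact ⟨hm, fun hgm => (hm.le_or_le_of_isGLB hud hg hgm).elim hxm hym⟩

theorem exists_irreduciblesNotAbove_eq_insert [Finite X] (hud : UpperDistributive X) {x y : X}
    (hxy : x ⋖ y) :
    ∃ m ∉ irreduciblesNotAbove x, irreduciblesNotAbove y = insert m (irreduciblesNotAbove x) := by
  obtain ⟨m, hm, hxm, hym⟩ := exists_hasUniqueCover_of_not_le hxy.lt.not_ge
  refine ⟨m, fun h => h.2 hxm, Set.ext fun m' => ⟨fun ⟨hm', hym'⟩ => ?_, ?_⟩⟩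
  · by_cases hxm' : x ≤ m'
    · exact Or.inl (hm'.eq_of_covBy hud hxy hxm' hym' hm hxm hym)
    · exact Or.inr ⟨hm', hxm'⟩
  · rintro (rfl | ⟨hm', hxm'⟩)
    · exact ⟨hm, hym⟩
    · exact ⟨hm', fun hym' => hxm' (hxy.le.trans hym')⟩

end UpperDistributiveRank

/-- A finite upper distributive join-semilattice is graded: it admits a rank function
`r` increasing by exactly `1` along covering pairs, and `r` is a valuation:
if `x ⊓ y` exists then `r x + r y = r (x ⊔ y) + r (x ⊓ y)`. -/
theorem exists_rank_valuation
    {X : Type*} [SemilatticeSup X] [Fintype X] (hud : UpperDistributive X) :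
    ∃ r : X → ℕ,
      (∀ x y : X, x ⋖ y → r y = r x + 1) ∧
      ∀ x y g : X, IsGLB {x, y} g → r x + r y = r (x ⊔ y) + r g := by
  refine ⟨fun x => (irreduciblesNotAbove x).ncard, fun x y hxy => ?_, fun x y g hg => ?_⟩
  · obtain ⟨m, hm, hy⟩ := exists_irreduciblesNotAbove_eq_insert hud hxy
    dsimp only
    rw [hy, Set.ncard_insert_of_notMem hm]
  · dsimp only
    rw [irreduciblesNotAbove_sup, irreduciblesNotAbove_of_isGLB hud hg,
      Set.ncard_union_add_ncard_inter]
end
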